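/- Let l and v be vertices of the triangular grid with dist_G(l,v) = i for some integer i ≥ 1. Then v has at most two neighbors w with dist_G(l,w) = i − 1, and at most two neighbors w with dist_G(l,w) = i. -/

import Mathlib

/-- The triangular grid: the simple graph on ℤ × ℤ where two vertices are adjacent
iff their difference lies in {(1,0),(−1,0),(0,1),(0,−1),(1,−1),(−1,1)}. -/
def triGrid : SimpleGraph (ℤ × ℤ) where
  Adj u v := (u.1 - v.1, u.2 - v.2) ∈
    ({(1,0), (-1,0), (0,1), (0,-1), (1,-1), (-1,1)} : Set (ℤ × ℤ))
  symm := by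
    constructor
    intro u v h
    simp only [Set.mem_insert_iff, Set.mem_singleton_iff, Prod.mk.injEq] at h ⊢
    omega
  loopless := by
    constructor
    intro u h
    simp only [Set.mem_insert_iff, Set.mem_singleton_iff, Prod.mk.injEq] at h
    omega

/-- The subgraph of the triangular grid induced by `S`, viewed as a graph on all of
ℤ × ℤ (vertices outside `S` are isolated): an edge requires both endpoints in `S`. -/
def gOn (S : Set (ℤ × ℤ)) : SimpleGraph (ℤ × ℤ) where
  Adj u v := triGrid.Adj u v ∧ u ∈ S ∧ v ∈ S
  symm := ⟨fun u v h => ⟨triGrid.symm.symm _ _ h.1, h.2.2, h.2.1⟩⟩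
  loopless := ⟨fun u h => triGrid.loopless.irrefl u h.1⟩

/-- A shape: a finite nonempty set of grid points. -/
def IsShape (S : Set (ℤ × ℤ)) : Prop := S.Finite ∧ S.Nonempty

/-- The subgraph of the grid induced by `S` is connected. -/
def ShapeConnected (S : Set (ℤ × ℤ)) : Prop :=
  ∀ u ∈ S, ∀ v ∈ S, (gOn S).Reachable u v

/-- A connected shape. -/
def ConnectedShape (S : Set (ℤ × ℤ)) : Prop := IsShape S ∧ ShapeConnected S

/-- The connected component of `x` in the subgraph induced by the complement of `S`. -/
def compOf (S : Set (ℤ × ℤ)) (x : ℤ × ℤ) : Set (ℤ × ℤ) :=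
  {y | (gOn Sᶜ).Reachable x y}

/-- A hole point of `S`: a point lying in a finite connected component of the
complement of `S`. -/
def IsHolePoint (S : Set (ℤ × ℤ)) (x : ℤ × ℤ) : Prop :=
  x ∉ S ∧ (compOf S x).Finite

/-- A simply-connected shape: connected and with no holes. -/
def SimplyConnectedShape (S : Set (ℤ × ℤ)) : Prop :=
  ConnectedShape S ∧ ∀ x, ¬ IsHolePoint S x

/-- Graph distance within the subgraph induced by `S`. -/
noncomputable def distS (S : Set (ℤ × ℤ)) (u v : ℤ × ℤ) : ℕ := (gOn S).dist u v

/-- Diameter of the shape `S` w.r.t. `distS`. -/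
noncomputable def shapeDiam (S : Set (ℤ × ℤ)) : ℕ :=
  sSup {d : ℕ | ∃ u ∈ S, ∃ v ∈ S, distS S u v = d}

/-- A boundary point of `S`: a point of `S` with a neighbor outside `S`. -/
def IsBoundaryPt (S : Set (ℤ × ℤ)) (v : ℤ × ℤ) : Prop :=
  v ∈ S ∧ ∃ w, triGrid.Adj v w ∧ w ∉ S

/-- An outer boundary point of `S`: a point of `S` with a neighbor lying in an
infinite connected component of the complement of `S`. -/
def IsOuterBoundaryPt (S : Set (ℤ × ℤ)) (v : ℤ × ℤ) : Prop :=
  v ∈ S ∧ ∃ w, triGrid.Adj v w ∧ w ∉ S ∧ (compOf S w).Infinite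

/-- An interior point of `S`: a point of `S` all of whose neighbors lie in `S`. -/
def IsInteriorPt (S : Set (ℤ × ℤ)) (v : ℤ × ℤ) : Prop :=
  v ∈ S ∧ ∀ w, triGrid.Adj v w → w ∈ S

/-- The six neighbor directions of a grid point, in cyclic order. -/
def dirs : Fin 6 → ℤ × ℤ := ![(1,0), (0,1), (-1,1), (-1,0), (0,-1), (1,-1)]

/-- The `i`-th neighbor of `v`, in the cyclic order of the 6-cycle of neighbors. -/
def nbr (v : ℤ × ℤ) (i : Fin 6) : ℤ × ℤ := (v.1 + (dirs i).1, v.2 + (dirs i).2)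

/-- The neighbors of `v` lying in `S`. -/
def nbrsIn (S : Set (ℤ × ℤ)) (v : ℤ × ℤ) : Set (ℤ × ℤ) :=
  {w | triGrid.Adj v w ∧ w ∈ S}

/-- `v` is redundant w.r.t. `S`: the neighbors of `v` in `S` induce a connected
subgraph of the grid. -/
def Redundant (S : Set (ℤ × ℤ)) (v : ℤ × ℤ) : Prop :=
  ∀ u ∈ nbrsIn S v, ∀ w ∈ nbrsIn S v, (gOn (nbrsIn S v)).Reachable u w

/-- `v` is erodable w.r.t. `S`: redundant and an outer boundary point of `S`. -/
def Erodable (S : Set (ℤ × ℤ)) (v : ℤ × ℤ) : Prop :=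
  Redundant S v ∧ IsOuterBoundaryPt S v

/-- A set of indices of neighbors that is an arc: a nonempty set of consecutive
positions in the cyclic order. -/
def IsArc (I : Set (Fin 6)) : Prop :=
  ∃ (a : Fin 6) (len : ℕ), 0 < len ∧ len ≤ 6 ∧
    I = {i | ∃ k : ℕ, k < len ∧ i = a + (Fin.ofNat 6 k)}

/-- The index set of the neighbors of `v` lying outside `S`. -/
def outIdx (S : Set (ℤ × ℤ)) (v : ℤ × ℤ) : Set (Fin 6) := {i | nbr v i ∉ S}

/-- A maximal arc of `v` w.r.t. `S`: a maximal arc of consecutive neighbors of `v`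
none of which lies in `S`. -/
def IsMaximalArc (S : Set (ℤ × ℤ)) (v : ℤ × ℤ) (I : Set (Fin 6)) : Prop :=
  IsArc I ∧ (∀ i ∈ I, nbr v i ∉ S) ∧
  ∀ J : Set (Fin 6), IsArc J → (∀ i ∈ J, nbr v i ∉ S) → I ⊆ J → I = J

/-- `v` is SCE (strictly convex and erodable) w.r.t. `S`: the neighbors of `v`
outside `S` form a single (maximal) arc of at least 3 points, and some neighbor of
`v` lies in an infinite connected component of the complement of `S`. -/
def SCE (S : Set (ℤ × ℤ)) (v : ℤ × ℤ) : Prop :=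
  IsArc (outIdx S v) ∧ 3 ≤ (outIdx S v).ncard ∧
  ∃ i : Fin 6, nbr v i ∉ S ∧ (compOf S (nbr v i)).Infinite

/-- The level set `L_i` of `l` in `S`. -/
noncomputable def levelSet (S : Set (ℤ × ℤ)) (l : ℤ × ℤ) (i : ℕ) : Set (ℤ × ℤ) :=
  {u ∈ S | distS S l u = i}

/-- The closed neighborhood `N_i` of `l` in `S`. -/
noncomputable def closedNbhd (S : Set (ℤ × ℤ)) (l : ℤ × ℤ) (i : ℕ) : Set (ℤ × ℤ) :=
  {u ∈ S | distS S l u ≤ i}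

/-- `v ∈ L_i` is `(i,k)`-SCE-related: some `u ∈ L_i` is SCE w.r.t. `N_i` and is at
distance at most `k` from `v` within the subgraph induced by `L_i`. -/
noncomputable def SCERelated (S : Set (ℤ × ℤ)) (l : ℤ × ℤ) (i k : ℕ) (v : ℤ × ℤ) : Prop :=
  ∃ u ∈ levelSet S l i, SCE (closedNbhd S l i) u ∧
    (gOn (levelSet S l i)).Reachable v u ∧ (gOn (levelSet S l i)).dist v u ≤ k

def hexD (x y : ℤ) : ℕ := (x.natAbs + y.natAbs + (x+y).natAbs) / 2

lemma adj_iff (u v : ℤ × ℤ) : triGrid.Adj u v ↔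
    ((u.1 - v.1 = 1 ∧ u.2 - v.2 = 0) ∨ (u.1 - v.1 = -1 ∧ u.2 - v.2 = 0) ∨
     (u.1 - v.1 = 0 ∧ u.2 - v.2 = 1) ∨ (u.1 - v.1 = 0 ∧ u.2 - v.2 = -1) ∨
     (u.1 - v.1 = 1 ∧ u.2 - v.2 = -1) ∨ (u.1 - v.1 = -1 ∧ u.2 - v.2 = 1)) := by
  simp [triGrid, Prod.ext_iff]

lemma walk_lb : ∀ {u v : ℤ × ℤ} (p : triGrid.Walk u v),
    hexD (v.1 - u.1) (v.2 - u.2) ≤ p.length := by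
  intro u v p
  induction p with
  | nil => simp [hexD]
  | cons h q ih =>
    rw [adj_iff] at h
    simp only [SimpleGraph.Walk.length_cons]
    simp only [hexD] at ih ⊢
    rcases h with ⟨h1,h2⟩|⟨h1,h2⟩|⟨h1,h2⟩|⟨h1,h2⟩|⟨h1,h2⟩|⟨h1,h2⟩ <;> omega

lemma step_lem (u w : ℤ × ℤ) (h : hexD (w.1 - u.1) (w.2 - u.2) ≠ 0) :
    ∃ u', triGrid.Adj u u' ∧
      hexD (w.1 - u'.1) (w.2 - u'.2) + 1 = hexD (w.1 - u.1) (w.2 - u.2) := by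
  rcases lt_trichotomy (w.1 - u.1) 0 with hx | hx | hx <;>
    rcases lt_trichotomy (w.2 - u.2) 0 with hy | hy | hy
  · exact ⟨(u.1 - 1, u.2), by rw [adj_iff]; omega, by simp only [hexD] at h ⊢; omega⟩
  · exact ⟨(u.1 - 1, u.2), by rw [adj_iff]; omega, by simp only [hexD] at h ⊢; omega⟩
  · exact ⟨(u.1 - 1, u.2 + 1), by rw [adj_iff]; omega, by simp only [hexD] at h ⊢; omega⟩
  · exact ⟨(u.1, u.2 - 1), by rw [adj_iff]; omega, by simp only [hexD] at h ⊢; omega⟩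
  · exact absurd (by simp only [hexD]; omega) h
  · exact ⟨(u.1, u.2 + 1), by rw [adj_iff]; omega, by simp only [hexD] at h ⊢; omega⟩
  · exact ⟨(u.1 + 1, u.2 - 1), by rw [adj_iff]; omega, by simp only [hexD] at h ⊢; omega⟩
  · exact ⟨(u.1 + 1, u.2), by rw [adj_iff]; omega, by simp only [hexD] at h ⊢; omega⟩
  · exact ⟨(u.1 + 1, u.2), by rw [adj_iff]; omega, by simp only [hexD] at h ⊢; omega⟩

lemma walk_ub : ∀ (n : ℕ) (u w : ℤ × ℤ), hexD (w.1 - u.1) (w.2 - u.2) = n →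
    ∃ p : triGrid.Walk u w, p.length = n := by
  intro n
  induction n with
  | zero =>
    intro u w h
    have h1 : u = w := by
      simp only [hexD] at h
      have : u.1 = w.1 ∧ u.2 = w.2 := by omega
      exact Prod.ext this.1 this.2
    subst h1
    exact ⟨SimpleGraph.Walk.nil, rfl⟩
  | succ n ih =>
    intro u w h
    obtain ⟨u', hadj, hstep⟩ := step_lem u w (by omega)
    obtain ⟨p, hp⟩ := ih u' w (by omega)
    exact ⟨SimpleGraph.Walk.cons hadj p, by simp [hp]⟩

lemma dist_eq_hexD (u w : ℤ × ℤ) :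
    triGrid.dist u w = hexD (w.1 - u.1) (w.2 - u.2) := by
  obtain ⟨p, hp⟩ := walk_ub _ u w rfl
  have h1 := SimpleGraph.dist_le p
  obtain ⟨q, hq⟩ := (p.reachable).exists_walk_length_eq_dist
  have h2 := walk_lb q
  omega

set_option maxHeartbeats 1000000 in
lemma pairlem (x y : ℤ) (j t : ℕ)
    (hd : x.natAbs + y.natAbs + (x+y).natAbs = 2*(j+1))
    (ht : t = j ∨ t = j+1) :
    ∃ p1 p2 q1 q2 : ℤ, ∀ a b : ℤ,
      ((a=1∧b=0)∨(a=-1∧b=0)∨(a=0∧b=1)∨(a=0∧b=-1)∨(a=1∧b=-1)∨(a=-1∧b=1)) →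
      (x+a).natAbs + (y+b).natAbs + (x+a+(y+b)).natAbs = 2*t →
      (a = p1 ∧ b = p2) ∨ (a = q1 ∧ b = q2) := by
  rcases ht with rfl | rfl <;>
    rcases lt_trichotomy x 0 with hx | hx | hx <;>
    rcases lt_trichotomy y 0 with hy | hy | hy <;>
    rcases lt_trichotomy (x+y) 0 with hz | hz | hz
  · refine ⟨0,1,1,0, ?_⟩
    intro a b hab hk
    rcases hab with ⟨rfl,rfl⟩|⟨rfl,rfl⟩|⟨rfl,rfl⟩|⟨rfl,rfl⟩|⟨rfl,rfl⟩|⟨rfl,rfl⟩ <;> omega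
  · refine ⟨0,0,0,0, ?_⟩
    intro a b hab hk
    rcases hab with ⟨rfl,rfl⟩|⟨rfl,rfl⟩|⟨rfl,rfl⟩|⟨rfl,rfl⟩|⟨rfl,rfl⟩|⟨rfl,rfl⟩ <;> omega
  · refine ⟨0,0,0,0, ?_⟩
    intro a b hab hk
    rcases hab with ⟨rfl,rfl⟩|⟨rfl,rfl⟩|⟨rfl,rfl⟩|⟨rfl,rfl⟩|⟨rfl,rfl⟩|⟨rfl,rfl⟩ <;> omega
  · refine ⟨1,0,1,0, ?_⟩
    intro a b hab hk
    rcases hab with ⟨rfl,rfl⟩|⟨rfl,rfl⟩|⟨rfl,rfl⟩|⟨rfl,rfl⟩|⟨rfl,rfl⟩|⟨rfl,rfl⟩ <;> omega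
  · refine ⟨0,0,0,0, ?_⟩
    intro a b hab hk
    rcases hab with ⟨rfl,rfl⟩|⟨rfl,rfl⟩|⟨rfl,rfl⟩|⟨rfl,rfl⟩|⟨rfl,rfl⟩|⟨rfl,rfl⟩ <;> omega
  · refine ⟨0,0,0,0, ?_⟩
    intro a b hab hk
    rcases hab with ⟨rfl,rfl⟩|⟨rfl,rfl⟩|⟨rfl,rfl⟩|⟨rfl,rfl⟩|⟨rfl,rfl⟩|⟨rfl,rfl⟩ <;> omega
  · refine ⟨1,-1,1,0, ?_⟩
    intro a b hab hk
    rcases hab with ⟨rfl,rfl⟩|⟨rfl,rfl⟩|⟨rfl,rfl⟩|⟨rfl,rfl⟩|⟨rfl,rfl⟩|⟨rfl,rfl⟩ <;> omega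
  · refine ⟨1,-1,1,-1, ?_⟩
    intro a b hab hk
    rcases hab with ⟨rfl,rfl⟩|⟨rfl,rfl⟩|⟨rfl,rfl⟩|⟨rfl,rfl⟩|⟨rfl,rfl⟩|⟨rfl,rfl⟩ <;> omega
  · refine ⟨0,-1,1,-1, ?_⟩
    intro a b hab hk
    rcases hab with ⟨rfl,rfl⟩|⟨rfl,rfl⟩|⟨rfl,rfl⟩|⟨rfl,rfl⟩|⟨rfl,rfl⟩|⟨rfl,rfl⟩ <;> omega
  · refine ⟨0,1,0,1, ?_⟩
    intro a b hab hk
    rcases hab with ⟨rfl,rfl⟩|⟨rfl,rfl⟩|⟨rfl,rfl⟩|⟨rfl,rfl⟩|⟨rfl,rfl⟩|⟨rfl,rfl⟩ <;> omega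
  · refine ⟨0,0,0,0, ?_⟩
    intro a b hab hk
    rcases hab with ⟨rfl,rfl⟩|⟨rfl,rfl⟩|⟨rfl,rfl⟩|⟨rfl,rfl⟩|⟨rfl,rfl⟩|⟨rfl,rfl⟩ <;> omega
  · refine ⟨0,0,0,0, ?_⟩
    intro a b hab hk
    rcases hab with ⟨rfl,rfl⟩|⟨rfl,rfl⟩|⟨rfl,rfl⟩|⟨rfl,rfl⟩|⟨rfl,rfl⟩|⟨rfl,rfl⟩ <;> omega
  · refine ⟨0,0,0,0, ?_⟩
    intro a b hab hk
    rcases hab with ⟨rfl,rfl⟩|⟨rfl,rfl⟩|⟨rfl,rfl⟩|⟨rfl,rfl⟩|⟨rfl,rfl⟩|⟨rfl,rfl⟩ <;> omega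
  · refine ⟨0,0,0,0, ?_⟩
    intro a b hab hk
    rcases hab with ⟨rfl,rfl⟩|⟨rfl,rfl⟩|⟨rfl,rfl⟩|⟨rfl,rfl⟩|⟨rfl,rfl⟩|⟨rfl,rfl⟩ <;> omega
  · refine ⟨0,0,0,0, ?_⟩
    intro a b hab hk
    rcases hab with ⟨rfl,rfl⟩|⟨rfl,rfl⟩|⟨rfl,rfl⟩|⟨rfl,rfl⟩|⟨rfl,rfl⟩|⟨rfl,rfl⟩ <;> omega
  · refine ⟨0,0,0,0, ?_⟩
    intro a b hab hk
    rcases hab with ⟨rfl,rfl⟩|⟨rfl,rfl⟩|⟨rfl,rfl⟩|⟨rfl,rfl⟩|⟨rfl,rfl⟩|⟨rfl,rfl⟩ <;> omega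
  · refine ⟨0,0,0,0, ?_⟩
    intro a b hab hk
    rcases hab with ⟨rfl,rfl⟩|⟨rfl,rfl⟩|⟨rfl,rfl⟩|⟨rfl,rfl⟩|⟨rfl,rfl⟩|⟨rfl,rfl⟩ <;> omega
  · refine ⟨0,-1,0,-1, ?_⟩
    intro a b hab hk
    rcases hab with ⟨rfl,rfl⟩|⟨rfl,rfl⟩|⟨rfl,rfl⟩|⟨rfl,rfl⟩|⟨rfl,rfl⟩|⟨rfl,rfl⟩ <;> omega
  · refine ⟨-1,1,0,1, ?_⟩
    intro a b hab hk
    rcases hab with ⟨rfl,rfl⟩|⟨rfl,rfl⟩|⟨rfl,rfl⟩|⟨rfl,rfl⟩|⟨rfl,rfl⟩|⟨rfl,rfl⟩ <;> omega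
  · refine ⟨-1,1,-1,1, ?_⟩
    intro a b hab hk
    rcases hab with ⟨rfl,rfl⟩|⟨rfl,rfl⟩|⟨rfl,rfl⟩|⟨rfl,rfl⟩|⟨rfl,rfl⟩|⟨rfl,rfl⟩ <;> omega
  · refine ⟨-1,0,-1,1, ?_⟩
    intro a b hab hk
    rcases hab with ⟨rfl,rfl⟩|⟨rfl,rfl⟩|⟨rfl,rfl⟩|⟨rfl,rfl⟩|⟨rfl,rfl⟩|⟨rfl,rfl⟩ <;> omega
  · refine ⟨0,0,0,0, ?_⟩
    intro a b hab hk
    rcases hab with ⟨rfl,rfl⟩|⟨rfl,rfl⟩|⟨rfl,rfl⟩|⟨rfl,rfl⟩|⟨rfl,rfl⟩|⟨rfl,rfl⟩ <;> omega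
  · refine ⟨0,0,0,0, ?_⟩
    intro a b hab hk
    rcases hab with ⟨rfl,rfl⟩|⟨rfl,rfl⟩|⟨rfl,rfl⟩|⟨rfl,rfl⟩|⟨rfl,rfl⟩|⟨rfl,rfl⟩ <;> omega
  · refine ⟨-1,0,-1,0, ?_⟩
    intro a b hab hk
    rcases hab with ⟨rfl,rfl⟩|⟨rfl,rfl⟩|⟨rfl,rfl⟩|⟨rfl,rfl⟩|⟨rfl,rfl⟩|⟨rfl,rfl⟩ <;> omega
  · refine ⟨0,0,0,0, ?_⟩
    intro a b hab hk
    rcases hab with ⟨rfl,rfl⟩|⟨rfl,rfl⟩|⟨rfl,rfl⟩|⟨rfl,rfl⟩|⟨rfl,rfl⟩|⟨rfl,rfl⟩ <;> omega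
  · refine ⟨0,0,0,0, ?_⟩
    intro a b hab hk
    rcases hab with ⟨rfl,rfl⟩|⟨rfl,rfl⟩|⟨rfl,rfl⟩|⟨rfl,rfl⟩|⟨rfl,rfl⟩|⟨rfl,rfl⟩ <;> omega
  · refine ⟨-1,0,0,-1, ?_⟩
    intro a b hab hk
    rcases hab with ⟨rfl,rfl⟩|⟨rfl,rfl⟩|⟨rfl,rfl⟩|⟨rfl,rfl⟩|⟨rfl,rfl⟩|⟨rfl,rfl⟩ <;> omega
  · refine ⟨-1,1,1,-1, ?_⟩
    intro a b hab hk
    rcases hab with ⟨rfl,rfl⟩|⟨rfl,rfl⟩|⟨rfl,rfl⟩|⟨rfl,rfl⟩|⟨rfl,rfl⟩|⟨rfl,rfl⟩ <;> omega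
  · refine ⟨0,0,0,0, ?_⟩
    intro a b hab hk
    rcases hab with ⟨rfl,rfl⟩|⟨rfl,rfl⟩|⟨rfl,rfl⟩|⟨rfl,rfl⟩|⟨rfl,rfl⟩|⟨rfl,rfl⟩ <;> omega
  · refine ⟨0,0,0,0, ?_⟩
    intro a b hab hk
    rcases hab with ⟨rfl,rfl⟩|⟨rfl,rfl⟩|⟨rfl,rfl⟩|⟨rfl,rfl⟩|⟨rfl,rfl⟩|⟨rfl,rfl⟩ <;> omega
  · refine ⟨0,1,1,-1, ?_⟩
    intro a b hab hk
    rcases hab with ⟨rfl,rfl⟩|⟨rfl,rfl⟩|⟨rfl,rfl⟩|⟨rfl,rfl⟩|⟨rfl,rfl⟩|⟨rfl,rfl⟩ <;> omega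
  · refine ⟨0,0,0,0, ?_⟩
    intro a b hab hk
    rcases hab with ⟨rfl,rfl⟩|⟨rfl,rfl⟩|⟨rfl,rfl⟩|⟨rfl,rfl⟩|⟨rfl,rfl⟩|⟨rfl,rfl⟩ <;> omega
  · refine ⟨0,0,0,0, ?_⟩
    intro a b hab hk
    rcases hab with ⟨rfl,rfl⟩|⟨rfl,rfl⟩|⟨rfl,rfl⟩|⟨rfl,rfl⟩|⟨rfl,rfl⟩|⟨rfl,rfl⟩ <;> omega
  · refine ⟨0,-1,0,1, ?_⟩
    intro a b hab hk
    rcases hab with ⟨rfl,rfl⟩|⟨rfl,rfl⟩|⟨rfl,rfl⟩|⟨rfl,rfl⟩|⟨rfl,rfl⟩|⟨rfl,rfl⟩ <;> omega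
  · refine ⟨0,-1,1,0, ?_⟩
    intro a b hab hk
    rcases hab with ⟨rfl,rfl⟩|⟨rfl,rfl⟩|⟨rfl,rfl⟩|⟨rfl,rfl⟩|⟨rfl,rfl⟩|⟨rfl,rfl⟩ <;> omega
  · refine ⟨-1,0,1,0, ?_⟩
    intro a b hab hk
    rcases hab with ⟨rfl,rfl⟩|⟨rfl,rfl⟩|⟨rfl,rfl⟩|⟨rfl,rfl⟩|⟨rfl,rfl⟩|⟨rfl,rfl⟩ <;> omega
  · refine ⟨-1,1,1,0, ?_⟩
    intro a b hab hk
    rcases hab with ⟨rfl,rfl⟩|⟨rfl,rfl⟩|⟨rfl,rfl⟩|⟨rfl,rfl⟩|⟨rfl,rfl⟩|⟨rfl,rfl⟩ <;> omega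
  · refine ⟨0,0,0,0, ?_⟩
    intro a b hab hk
    rcases hab with ⟨rfl,rfl⟩|⟨rfl,rfl⟩|⟨rfl,rfl⟩|⟨rfl,rfl⟩|⟨rfl,rfl⟩|⟨rfl,rfl⟩ <;> omega
  · refine ⟨0,0,0,0, ?_⟩
    intro a b hab hk
    rcases hab with ⟨rfl,rfl⟩|⟨rfl,rfl⟩|⟨rfl,rfl⟩|⟨rfl,rfl⟩|⟨rfl,rfl⟩|⟨rfl,rfl⟩ <;> omega
  · refine ⟨0,0,0,0, ?_⟩
    intro a b hab hk
    rcases hab with ⟨rfl,rfl⟩|⟨rfl,rfl⟩|⟨rfl,rfl⟩|⟨rfl,rfl⟩|⟨rfl,rfl⟩|⟨rfl,rfl⟩ <;> omega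
  · refine ⟨0,0,0,0, ?_⟩
    intro a b hab hk
    rcases hab with ⟨rfl,rfl⟩|⟨rfl,rfl⟩|⟨rfl,rfl⟩|⟨rfl,rfl⟩|⟨rfl,rfl⟩|⟨rfl,rfl⟩ <;> omega
  · refine ⟨0,0,0,0, ?_⟩
    intro a b hab hk
    rcases hab with ⟨rfl,rfl⟩|⟨rfl,rfl⟩|⟨rfl,rfl⟩|⟨rfl,rfl⟩|⟨rfl,rfl⟩|⟨rfl,rfl⟩ <;> omega
  · refine ⟨0,0,0,0, ?_⟩
    intro a b hab hk
    rcases hab with ⟨rfl,rfl⟩|⟨rfl,rfl⟩|⟨rfl,rfl⟩|⟨rfl,rfl⟩|⟨rfl,rfl⟩|⟨rfl,rfl⟩ <;> omega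
  · refine ⟨0,0,0,0, ?_⟩
    intro a b hab hk
    rcases hab with ⟨rfl,rfl⟩|⟨rfl,rfl⟩|⟨rfl,rfl⟩|⟨rfl,rfl⟩|⟨rfl,rfl⟩|⟨rfl,rfl⟩ <;> omega
  · refine ⟨-1,0,1,-1, ?_⟩
    intro a b hab hk
    rcases hab with ⟨rfl,rfl⟩|⟨rfl,rfl⟩|⟨rfl,rfl⟩|⟨rfl,rfl⟩|⟨rfl,rfl⟩|⟨rfl,rfl⟩ <;> omega
  · refine ⟨-1,0,1,0, ?_⟩
    intro a b hab hk
    rcases hab with ⟨rfl,rfl⟩|⟨rfl,rfl⟩|⟨rfl,rfl⟩|⟨rfl,rfl⟩|⟨rfl,rfl⟩|⟨rfl,rfl⟩ <;> omega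
  · refine ⟨-1,0,0,1, ?_⟩
    intro a b hab hk
    rcases hab with ⟨rfl,rfl⟩|⟨rfl,rfl⟩|⟨rfl,rfl⟩|⟨rfl,rfl⟩|⟨rfl,rfl⟩|⟨rfl,rfl⟩ <;> omega
  · refine ⟨0,-1,0,1, ?_⟩
    intro a b hab hk
    rcases hab with ⟨rfl,rfl⟩|⟨rfl,rfl⟩|⟨rfl,rfl⟩|⟨rfl,rfl⟩|⟨rfl,rfl⟩|⟨rfl,rfl⟩ <;> omega
  · refine ⟨0,0,0,0, ?_⟩
    intro a b hab hk
    rcases hab with ⟨rfl,rfl⟩|⟨rfl,rfl⟩|⟨rfl,rfl⟩|⟨rfl,rfl⟩|⟨rfl,rfl⟩|⟨rfl,rfl⟩ <;> omega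
  · refine ⟨0,0,0,0, ?_⟩
    intro a b hab hk
    rcases hab with ⟨rfl,rfl⟩|⟨rfl,rfl⟩|⟨rfl,rfl⟩|⟨rfl,rfl⟩|⟨rfl,rfl⟩|⟨rfl,rfl⟩ <;> omega
  · refine ⟨-1,1,0,-1, ?_⟩
    intro a b hab hk
    rcases hab with ⟨rfl,rfl⟩|⟨rfl,rfl⟩|⟨rfl,rfl⟩|⟨rfl,rfl⟩|⟨rfl,rfl⟩|⟨rfl,rfl⟩ <;> omega
  · refine ⟨0,0,0,0, ?_⟩
    intro a b hab hk
    rcases hab with ⟨rfl,rfl⟩|⟨rfl,rfl⟩|⟨rfl,rfl⟩|⟨rfl,rfl⟩|⟨rfl,rfl⟩|⟨rfl,rfl⟩ <;> omega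
  · refine ⟨0,0,0,0, ?_⟩
    intro a b hab hk
    rcases hab with ⟨rfl,rfl⟩|⟨rfl,rfl⟩|⟨rfl,rfl⟩|⟨rfl,rfl⟩|⟨rfl,rfl⟩|⟨rfl,rfl⟩ <;> omega
  · refine ⟨-1,1,1,-1, ?_⟩
    intro a b hab hk
    rcases hab with ⟨rfl,rfl⟩|⟨rfl,rfl⟩|⟨rfl,rfl⟩|⟨rfl,rfl⟩|⟨rfl,rfl⟩|⟨rfl,rfl⟩ <;> omega

set_option maxHeartbeats 1600000 in
lemma part_lem (l v : ℤ × ℤ) (j t : ℕ) (hd : triGrid.dist l v = j + 1)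
    (ht : t = j ∨ t = j + 1) :
    {w | triGrid.Adj v w ∧ triGrid.dist l w = t}.ncard ≤ 2 := by
  rw [dist_eq_hexD] at hd
  simp only [hexD] at hd
  have hd' : (v.1 - l.1).natAbs + (v.2 - l.2).natAbs + (v.1 - l.1 + (v.2 - l.2)).natAbs
      = 2 * (j + 1) := by omega
  obtain ⟨p1, p2, q1, q2, hpq⟩ := pairlem (v.1 - l.1) (v.2 - l.2) j t hd' ht
  have hsub : {w | triGrid.Adj v w ∧ triGrid.dist l w = t} ⊆
      {(v.1 + p1, v.2 + p2), (v.1 + q1, v.2 + q2)} := by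
    rintro w ⟨haj, hw⟩
    rw [adj_iff] at haj
    rw [dist_eq_hexD] at hw
    simp only [hexD] at hw
    have hk : (v.1 - l.1 + (w.1 - v.1)).natAbs + (v.2 - l.2 + (w.2 - v.2)).natAbs +
        (v.1 - l.1 + (w.1 - v.1) + (v.2 - l.2 + (w.2 - v.2))).natAbs = 2 * t := by omega
    have hab : ((w.1 - v.1 = 1 ∧ w.2 - v.2 = 0) ∨ (w.1 - v.1 = -1 ∧ w.2 - v.2 = 0) ∨
        (w.1 - v.1 = 0 ∧ w.2 - v.2 = 1) ∨ (w.1 - v.1 = 0 ∧ w.2 - v.2 = -1) ∨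
        (w.1 - v.1 = 1 ∧ w.2 - v.2 = -1) ∨ (w.1 - v.1 = -1 ∧ w.2 - v.2 = 1)) := by omega
    have := hpq (w.1 - v.1) (w.2 - v.2) hab hk
    simp only [Set.mem_insert_iff, Set.mem_singleton_iff, Prod.ext_iff]
    omega
  refine le_trans (Set.ncard_le_ncard hsub (by
    exact (Set.finite_singleton _).insert _)) ?_
  exact le_trans (Set.ncard_insert_le _ _) (by simp)

/-- If `dist_G(l,v) = i ≥ 1` in the triangular grid, then `v` has at
most two neighbors at distance `i − 1` from `l` and at most two neighbors at
distance `i` from `l`. -/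
theorem stmt17 (l v : ℤ × ℤ) (i : ℕ) (hi : 1 ≤ i) (hd : triGrid.dist l v = i) :
    {w | triGrid.Adj v w ∧ triGrid.dist l w = i - 1}.ncard ≤ 2 ∧
    {w | triGrid.Adj v w ∧ triGrid.dist l w = i}.ncard ≤ 2 := by
  obtain ⟨j, rfl⟩ : ∃ j, i = j + 1 := ⟨i - 1, by omega⟩
  constructor
  · have := part_lem l v j (j + 1 - 1) hd (by omega)
    exact this
  · exact part_lem l v j (j + 1) hd (Or.inr rfl)
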